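/- (Jacobi identity) For every τ in the upper half-plane H, the function v ↦ θ(v, τ) is differentiable in v and its derivative at v = 0 satisfies θ'(0, τ) = π · θ₁(0, τ) · θ₂(0, τ) · θ₃(0, τ). -/

import Mathlib

/-
Write every product as q-Pochhammer symbols `(a; q)_∞ = ∏_{k ≥ 0} (1 - a qᵏ)`, with
`q = e^{2πiτ}` and `Q = e^{πiτ}`, so `Q² = q`:
`θ(v) = 2 q^{1/8} sin(πv) (q; q)(e^{2πiv} q; q)(e^{-2πiv} q; q)`, `θ₁(0) = 2 q^{1/8} (q; q)(-q; q)²`,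
`θ₂(0) = (q; q)(Q; q)²`, `θ₃(0) = (q; q)(-Q; q)²`.
Each `a ↦ (a; q)_∞` is entire, being a locally uniform limit of polynomials, so `θ` is entire, and
since `sin 0 = 0` we get `θ'(0) = 2π q^{1/8} (q; q)³`. The claim thus reduces to
`(-q; q)(Q; q)(-Q; q) = 1`. Now `(Q; q)(-Q; q) = (q; q²)`, and Euler's identity `(-q; q)(q; q²) = 1`
follows by cancelling `(q²; q²)` in `(-q; q)(q; q²)(q²; q²) = (-q; q)(q; q) = (q²; q²)`, where the first
step splits the factors of `(q; q)` by parity.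
-/

open Complex Real

/-- `q = e^{2πiτ}`. -/
noncomputable def jq (τ : ℂ) : ℂ := Complex.exp (2 * (π : ℂ) * Complex.I * τ)

/-- `θ(v,τ) = 2 q^{1/8} sin(πv) ∏_{j=1}^∞ (1-q^j)(1-e^{2πiv}q^j)(1-e^{-2πiv}q^j)`. -/
noncomputable def jTheta (v τ : ℂ) : ℂ :=
  2 * Complex.exp ((π : ℂ) * Complex.I * τ / 4) * Complex.sin ((π : ℂ) * v) *
    ∏' j : ℕ, ((1 - jq τ ^ (j + 1)) *
      (1 - Complex.exp (2 * (π : ℂ) * Complex.I * v) * jq τ ^ (j + 1)) *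
      (1 - Complex.exp (-(2 * (π : ℂ) * Complex.I * v)) * jq τ ^ (j + 1)))

/-- `θ₁(v,τ) = 2 q^{1/8} cos(πv) ∏_{j=1}^∞ (1-q^j)(1+e^{2πiv}q^j)(1+e^{-2πiv}q^j)`. -/
noncomputable def jTheta₁ (v τ : ℂ) : ℂ :=
  2 * Complex.exp ((π : ℂ) * Complex.I * τ / 4) * Complex.cos ((π : ℂ) * v) *
    ∏' j : ℕ, ((1 - jq τ ^ (j + 1)) *
      (1 + Complex.exp (2 * (π : ℂ) * Complex.I * v) * jq τ ^ (j + 1)) *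
      (1 + Complex.exp (-(2 * (π : ℂ) * Complex.I * v)) * jq τ ^ (j + 1)))

/-- `θ₂(v,τ) = ∏_{j=1}^∞ (1-q^j)(1-e^{2πiv}q^{j-1/2})(1-e^{-2πiv}q^{j-1/2})`. -/
noncomputable def jTheta₂ (v τ : ℂ) : ℂ :=
  ∏' j : ℕ, ((1 - jq τ ^ (j + 1)) *
    (1 - Complex.exp (2 * (π : ℂ) * Complex.I * v) *
      Complex.exp (2 * (π : ℂ) * Complex.I * τ * ((j : ℂ) + 1 / 2))) *
    (1 - Complex.exp (-(2 * (π : ℂ) * Complex.I * v)) *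
      Complex.exp (2 * (π : ℂ) * Complex.I * τ * ((j : ℂ) + 1 / 2))))

/-- `θ₃(v,τ) = ∏_{j=1}^∞ (1-q^j)(1+e^{2πiv}q^{j-1/2})(1+e^{-2πiv}q^{j-1/2})`. -/
noncomputable def jTheta₃ (v τ : ℂ) : ℂ :=
  ∏' j : ℕ, ((1 - jq τ ^ (j + 1)) *
    (1 + Complex.exp (2 * (π : ℂ) * Complex.I * v) *
      Complex.exp (2 * (π : ℂ) * Complex.I * τ * ((j : ℂ) + 1 / 2))) *
    (1 + Complex.exp (-(2 * (π : ℂ) * Complex.I * v)) *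
      Complex.exp (2 * (π : ℂ) * Complex.I * τ * ((j : ℂ) + 1 / 2))))


/-- The q-Pochhammer symbol `(a; q)_∞`. -/
noncomputable def qPochhammer (a q : ℂ) : ℂ := ∏' k : ℕ, (1 - a * q ^ k)

section qPochhammer

variable {q : ℂ}

lemma multipliable_one_sub_mul_pow (hq : ‖q‖ < 1) (a : ℂ) :
    Multipliable fun k : ℕ ↦ 1 - a * q ^ k := by
  simpa [sub_eq_add_neg] using Complex.multipliable_one_add_of_summable
    ((summable_geometric_of_norm_lt_one hq).mul_left (-a))

lemma qPochhammer_ne_zero (hq : ‖q‖ < 1) {a : ℂ} (ha : ‖a‖ < 1) : qPochhammer a q ≠ 0 := by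
  have hfac (k : ℕ) : ‖a * q ^ k‖ < 1 := by
    rw [norm_mul, norm_pow]
    exact mul_lt_one_of_nonneg_of_lt_one_left (norm_nonneg a) ha
      (pow_le_one₀ (norm_nonneg q) hq.le)
  simpa [qPochhammer, sub_eq_add_neg] using tprod_one_add_ne_zero_of_summable
    (f := fun k : ℕ ↦ -(a * q ^ k))
    (fun k h ↦ by simpa [show a * q ^ k = 1 by linear_combination -h] using hfac k)
    (by simpa [norm_mul, norm_pow] using
      (summable_geometric_of_lt_one (norm_nonneg q) hq).mul_left ‖a‖)

lemma qPochhammer_mul_mul (hq : ‖q‖ < 1) (a b c : ℂ) :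
    qPochhammer a q * qPochhammer b q * qPochhammer c q =
      ∏' k : ℕ, (1 - a * q ^ k) * (1 - b * q ^ k) * (1 - c * q ^ k) := by
  rw [Multipliable.tprod_mul
      ((multipliable_one_sub_mul_pow hq a).mul (multipliable_one_sub_mul_pow hq b))
      (multipliable_one_sub_mul_pow hq c),
    Multipliable.tprod_mul (multipliable_one_sub_mul_pow hq a)
      (multipliable_one_sub_mul_pow hq b), qPochhammer, qPochhammer, qPochhammer]

lemma qPochhammer_mul_qPochhammer_neg (hq : ‖q‖ < 1) (a : ℂ) :
    qPochhammer a q * qPochhammer (-a) q = qPochhammer (a ^ 2) (q ^ 2) := by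
  rw [qPochhammer, qPochhammer, qPochhammer, ← Multipliable.tprod_mul
    (multipliable_one_sub_mul_pow hq a) (multipliable_one_sub_mul_pow hq (-a))]
  exact tprod_congr fun k ↦ by ring

lemma qPochhammer_eq_mul_sq (hq : ‖q‖ < 1) (a : ℂ) :
    qPochhammer a q = qPochhammer a (q ^ 2) * qPochhammer (a * q) (q ^ 2) := by
  have hq2 : ‖q ^ 2‖ < 1 := by simpa using pow_lt_one₀ (norm_nonneg q) hq two_ne_zero
  have heven (k : ℕ) : 1 - a * q ^ (2 * k) = 1 - a * (q ^ 2) ^ k := by rw [pow_mul]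
  have hodd (k : ℕ) : 1 - a * q ^ (2 * k + 1) = 1 - a * q * (q ^ 2) ^ k := by ring
  rw [qPochhammer, qPochhammer, qPochhammer, ← tprod_even_mul_odd
      ((multipliable_one_sub_mul_pow hq2 a).congr fun k ↦ (heven k).symm)
      ((multipliable_one_sub_mul_pow hq2 (a * q)).congr fun k ↦ (hodd k).symm),
    tprod_congr heven, tprod_congr hodd]

lemma differentiable_qPochhammer (hq : ‖q‖ < 1) : Differentiable ℂ fun a ↦ qPochhammer a q := by
  intro a₀
  set R := ‖a₀‖ + 1
  have hball : DifferentiableOn ℂ (fun a : ℂ ↦ ∏' k : ℕ, (1 + -(a * q ^ k)))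
      (Metric.ball 0 R) := by
    refine (Summable.hasProdLocallyUniformlyOn_nat_one_add (f := fun k a ↦ -(a * q ^ k))
      Metric.isOpen_ball
      ((summable_geometric_of_lt_one (norm_nonneg q) hq).mul_left R)
      (.of_forall fun k a ha ↦ ?_) fun k ↦ by fun_prop).differentiableOn
      (.of_forall fun s ↦ by simpa [Finset.prod_fn] using
        DifferentiableOn.finsetProd fun k _ ↦ by fun_prop) Metric.isOpen_ball
    rw [mem_ball_zero_iff] at ha
    rw [norm_neg, norm_mul, norm_pow]
    gcongr
  simpa [qPochhammer, ← sub_eq_add_neg] using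
    hball.differentiableAt (Metric.isOpen_ball.mem_nhds (by simp [R]))

lemma qPochhammer_neg_mul_qPochhammer_sq (hq : ‖q‖ < 1) :
    qPochhammer (-q) q * qPochhammer q (q ^ 2) = 1 := by
  have hq2 : ‖q ^ 2‖ < 1 := by simpa using pow_lt_one₀ (norm_nonneg q) hq two_ne_zero
  apply mul_left_cancel₀ (qPochhammer_ne_zero hq2 hq2)
  calc qPochhammer (q ^ 2) (q ^ 2) * (qPochhammer (-q) q * qPochhammer q (q ^ 2))
      = qPochhammer (-q) q * qPochhammer q q := by
        rw [qPochhammer_eq_mul_sq hq q, ← sq]; ring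
    _ = qPochhammer (q ^ 2) (q ^ 2) * 1 := by
        rw [mul_one, mul_comm, qPochhammer_mul_qPochhammer_neg hq]

end qPochhammer

lemma hasDerivAt_sin_mul_at_zero {f : ℂ → ℂ} (hf : DifferentiableAt ℂ f 0) (c : ℂ) :
    HasDerivAt (fun v ↦ Complex.sin (c * v) * f v) (c * f 0) 0 := by
  simpa using (((hasDerivAt_id 0).const_mul c).csin).fun_mul hf.hasDerivAt

section Theta

variable (τ : ℂ)

lemma norm_exp_pi_mul_I_lt_one (hτ : 0 < τ.im) : ‖Complex.exp (π * I * τ)‖ < 1 := by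
  rw [Complex.norm_exp, Real.exp_lt_one_iff]
  simpa [Complex.mul_re] using mul_pos Real.pi_pos hτ

lemma jq_eq_sq : jq τ = Complex.exp (π * I * τ) ^ 2 := by
  rw [jq, ← Complex.exp_nat_mul]; ring_nf

lemma norm_jq_lt_one (hτ : 0 < τ.im) : ‖jq τ‖ < 1 := by
  simpa [jq_eq_sq] using pow_lt_one₀ (norm_nonneg _) (norm_exp_pi_mul_I_lt_one τ hτ) two_ne_zero

lemma exp_mul_half_odd (j : ℕ) :
    Complex.exp (2 * π * I * τ * ((j : ℂ) + 1 / 2)) = Complex.exp (π * I * τ) * jq τ ^ j := by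
  rw [jq, ← Complex.exp_nat_mul, ← Complex.exp_add]; ring_nf

variable {τ}

lemma jTheta_eq (hq : ‖jq τ‖ < 1) (v : ℂ) :
    jTheta v τ = 2 * Complex.exp (π * I * τ / 4) * Complex.sin (π * v) *
      (qPochhammer (jq τ) (jq τ) * qPochhammer (Complex.exp (2 * π * I * v) * jq τ) (jq τ) *
        qPochhammer (Complex.exp (-(2 * π * I * v)) * jq τ) (jq τ)) := by
  rw [jTheta, qPochhammer_mul_mul hq]
  exact congrArg _ (tprod_congr fun j ↦ by ring)

lemma jTheta₁_zero (hq : ‖jq τ‖ < 1) :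
    jTheta₁ 0 τ = 2 * Complex.exp (π * I * τ / 4) *
      (qPochhammer (jq τ) (jq τ) * qPochhammer (-jq τ) (jq τ) * qPochhammer (-jq τ) (jq τ)) := by
  rw [jTheta₁, qPochhammer_mul_mul hq]
  simp only [mul_zero, neg_zero, Complex.exp_zero, Complex.cos_zero, mul_one]
  exact congrArg _ (tprod_congr fun j ↦ by ring)

lemma jTheta₂_zero (hq : ‖jq τ‖ < 1) :
    jTheta₂ 0 τ = qPochhammer (jq τ) (jq τ) * qPochhammer (Complex.exp (π * I * τ)) (jq τ) *
      qPochhammer (Complex.exp (π * I * τ)) (jq τ) := by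
  rw [jTheta₂, qPochhammer_mul_mul hq]
  exact tprod_congr fun j ↦ by
    simp only [exp_mul_half_odd, mul_zero, neg_zero, Complex.exp_zero, one_mul]; ring

lemma jTheta₃_zero (hq : ‖jq τ‖ < 1) :
    jTheta₃ 0 τ = qPochhammer (jq τ) (jq τ) * qPochhammer (-Complex.exp (π * I * τ)) (jq τ) *
      qPochhammer (-Complex.exp (π * I * τ)) (jq τ) := by
  rw [jTheta₃, qPochhammer_mul_mul hq]
  exact tprod_congr fun j ↦ by
    simp only [exp_mul_half_odd, mul_zero, neg_zero, Complex.exp_zero, one_mul]; ring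

end Theta

theorem stmt4 (τ : ℂ) (hτ : 0 < τ.im) :
    Differentiable ℂ (fun v : ℂ => jTheta v τ) ∧
    deriv (fun v : ℂ => jTheta v τ) 0 =
      (π : ℂ) * jTheta₁ 0 τ * jTheta₂ 0 τ * jTheta₃ 0 τ := by
  set Q := Complex.exp (π * I * τ)
  set q := jq τ
  have hq : ‖q‖ < 1 := norm_jq_lt_one τ hτ
  set P : ℂ → ℂ := fun v ↦ qPochhammer q q * qPochhammer (Complex.exp (2 * π * I * v) * q) q *
    qPochhammer (Complex.exp (-(2 * π * I * v)) * q) q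
  have hP : Differentiable ℂ P := by
    have := differentiable_qPochhammer hq
    fun_prop
  have hθ : (fun v ↦ jTheta v τ) = fun v ↦ 2 * Complex.exp (π * I * τ / 4) *
      (Complex.sin (π * v) * P v) := funext fun v ↦ by rw [jTheta_eq hq]; ring
  have hEuler : qPochhammer (-q) q * (qPochhammer Q q * qPochhammer (-Q) q) = 1 := by
    rw [qPochhammer_mul_qPochhammer_neg hq, ← jq_eq_sq]
    exact qPochhammer_neg_mul_qPochhammer_sq hq
  refine ⟨hθ ▸ by fun_prop, ?_⟩
  rw [hθ, ((hasDerivAt_sin_mul_at_zero (hP 0) π).const_mul _).deriv, jTheta₁_zero hq,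
    jTheta₂_zero hq, jTheta₃_zero hq]
  simp only [P, mul_zero, neg_zero, Complex.exp_zero, one_mul]
  linear_combination (-(2 * Complex.exp (π * I * τ / 4) * π * qPochhammer q q ^ 3 *
    (qPochhammer (-q) q * (qPochhammer Q q * qPochhammer (-Q) q) + 1))) * hEuler
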